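/- arXiv:1202.0800 — 7 statements merged into one kernel-verified Lean document; each statement's English description precedes it below -/
import Mathlib

section
/- Let q be a prime power, F_q ⊆ F_{q^N}, and let f(x) = ∑_{i=0}^{K−1} a_i x^{q^i} be a linearized polynomial over F_{q^N} with K ≤ N. If there exist elements g_1, …, g_K ∈ F_{q^N} that are linearly independent over F_q such that f(g_j) = 0 for all j = 1, …, K, then all coefficients of f are zero: a_0 = a_1 = ⋯ = a_{K−1} = 0. -/
/-! Over a finite field `F` with `q` elements, `x ↦ x ^ q` is the Frobenius `F`-algebra
endomorphism, so `x ↦ ∑ aᵢ x ^ q ^ i` is `F`-linear and vanishes on the whole `F`-span of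
the `gⱼ`. By linear independence that span has `q ^ K` elements, more than the degree
`≤ q ^ (K - 1)` of the polynomial `∑ aᵢ X ^ q ^ i`, which is therefore zero. -/

open Polynomial

namespace Polynomial

section Linearized

variable {R : Type*} [CommRing R] (q : ℕ) {K : ℕ}

noncomputable def linearized (a : Fin K → R) : R[X] :=
  ∑ i, C (a i) * X ^ q ^ (i : ℕ)

theorem eval_linearized (a : Fin K → R) (x : R) :
    (linearized q a).eval x = ∑ i, a i * x ^ q ^ (i : ℕ) := by
  simp [linearized, eval_finsetSum]

variable {q}

theorem natDegree_linearized_lt (hq : 1 < q) (a : Fin K → R) :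
    (linearized q a).natDegree < q ^ K := by
  rcases K.eq_zero_or_pos with rfl | hK
  · simp [linearized]
  calc (linearized q a).natDegree ≤ q ^ (K - 1) :=
        natDegree_sum_le_of_forall_le _ _ fun i _ =>
          (natDegree_C_mul_X_pow_le _ _).trans (Nat.pow_le_pow_right (by omega) (by omega))
    _ < q ^ K := Nat.pow_lt_pow_right hq (by omega)

theorem coeff_linearized_pow (hq : 1 < q) (a : Fin K → R) (i : Fin K) :
    (linearized q a).coeff (q ^ (i : ℕ)) = a i := by
  have hinj : Function.Injective fun j : Fin K => q ^ (j : ℕ) :=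
    (Nat.pow_right_injective hq).comp Fin.val_injective
  simp only [linearized, finsetSum_coeff, coeff_C_mul_X_pow]
  rw [Finset.sum_eq_single i (fun j _ hji => if_neg fun h => hji (hinj h.symm)) (by simp)]
  simp

variable (F : Type*) {L : Type*} [Field F] [Fintype F] [CommRing L] [Algebra F L]

noncomputable def linearizedEvalₗ (a : Fin K → L) : L →ₗ[F] L :=
  ∑ i, LinearMap.mulLeft F (a i) ∘ₗ ((FiniteField.frobeniusAlgHom F L) ^ (i : ℕ)).toLinearMap

variable {F}

theorem linearizedEvalₗ_apply (a : Fin K → L) (x : L) :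
    linearizedEvalₗ F a x = (linearized (Fintype.card F) a).eval x := by
  simp [linearizedEvalₗ, eval_linearized, FiniteField.coe_frobeniusAlgHom, pow_iterate]

theorem eval_linearized_eq_zero_of_mem_span {ι : Type*} (a : Fin K → L) (g : ι → L)
    (hz : ∀ j, (linearized (Fintype.card F) a).eval (g j) = 0) {x : L}
    (hx : x ∈ Submodule.span F (Set.range g)) :
    (linearized (Fintype.card F) a).eval x = 0 := by
  have hspan : Submodule.span F (Set.range g) ≤ LinearMap.ker (linearizedEvalₗ F a) :=
    Submodule.span_le.mpr <| Set.range_subset_iff.mpr fun j => by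
      simp [linearizedEvalₗ_apply, hz]
  rw [← linearizedEvalₗ_apply]
  exact hspan hx

theorem linearized_eq_zero_of_eval_eq_zero [IsDomain L] (a g : Fin K → L)
    (hg : LinearIndependent F g) (hz : ∀ j, (linearized (Fintype.card F) a).eval (g j) = 0) :
    linearized (Fintype.card F) a = 0 := by
  refine eq_zero_of_natDegree_lt_card_of_eval_eq_zero _ hg.fintypeLinearCombination_injective
    (fun c => eval_linearized_eq_zero_of_mem_span a g hz ?_) ?_
  · exact Fintype.range_linearCombination F g ▸ LinearMap.mem_range_self _ c
  · rw [Fintype.card_pi_const]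
    exact natDegree_linearized_lt Fintype.one_lt_card a

end Linearized

end Polynomial

theorem linearized_polynomial_vanishing_on_independent_points_general
    (q K : ℕ)
    (Fq FqN : Type) [Field Fq] [Field FqN] [Algebra Fq FqN]
    [Fintype Fq]
    (hcard : Fintype.card Fq = q)
    (a : Fin K → FqN)
    (f : FqN → FqN) (hf : ∀ x, f x = ∑ i : Fin K, a i * x ^ q ^ (i : ℕ))
    (g : Fin K → FqN) (hg : LinearIndependent Fq g)
    (hz : ∀ j : Fin K, f (g j) = 0) :
    ∀ i : Fin K, a i = 0 := by
  subst hcard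
  obtain rfl : f = fun x => (linearized (Fintype.card Fq) a).eval x :=
    funext fun x => by rw [hf, eval_linearized]
  have hP : linearized (Fintype.card Fq) a = 0 := linearized_eq_zero_of_eval_eq_zero a g hg hz
  intro i
  rw [← coeff_linearized_pow (Fintype.one_lt_card (α := Fq)) a i, hP, coeff_zero]

/-- A linearized polynomial `f(x) = ∑_{i=0}^{K-1} a_i x^{q^i}` over `F_{q^N}`
(with `K ≤ N`) vanishing on `K` points of `F_{q^N}` that are linearly independent over `F_q`
must have all coefficients zero. -/
theorem linearized_polynomial_vanishing_on_independent_points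
    (q N K : ℕ) (hq : ∃ p e : ℕ, p.Prime ∧ 0 < e ∧ q = p ^ e) (hKN : K ≤ N)
    (Fq FqN : Type) [Field Fq] [Field FqN] [Algebra Fq FqN]
    [Fintype Fq] [Fintype FqN]
    (hcard : Fintype.card Fq = q) (hcardN : Fintype.card FqN = q ^ N)
    (a : Fin K → FqN)
    (f : FqN → FqN) (hf : ∀ x, f x = ∑ i : Fin K, a i * x ^ q ^ (i : ℕ))
    (g : Fin K → FqN) (hg : LinearIndependent Fq g)
    (hz : ∀ j : Fin K, f (g j) = 0) :
    ∀ i : Fin K, a i = 0 :=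
  linearized_polynomial_vanishing_on_independent_points_general q K Fq FqN hcard a f hf g hg hz
end

section
/- Let q be a prime power, F_q ⊆ F_{q^N}, let K ≤ m ≤ N, let g_1, …, g_m ∈ F_{q^N} be linearly independent over F_q, and let f(x) = ∑_{i=0}^{K−1} a_i x^{q^i} be a linearized polynomial with not all coefficients zero. Then the rank weight of the codeword (f(g_1), …, f(g_m)) is at least m − K + 1; that is, the dimension over F_q of the F_q-linear span of {f(g_1), …, f(g_m)} in F_{q^N} is at least m − K + 1. Consequently the Gabidulin code has minimum rank distance m − K + 1 and is a maximum rank distance (MRD) code. -/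
/-!
For `a ≠ 0`, `f(x) = ∑ aᵢ x^{q^i}` is an `F_q`-linear map (`x ↦ x^q` is the Frobenius over `F_q`)
whose kernel consists of roots of a nonzero polynomial of degree at most `q^{K-1}`. A kernel of
`F_q`-dimension `d` has `q^d` elements, so `d ≤ K - 1`, and rank–nullity on the `m`-dimensional
span of the `gⱼ` leaves an image of dimension at least `m - (K - 1)`.
-/

open Polynomial Module LinearMap

theorem Submodule.finrank_sub_finrank_ker_le_finrank_map {K V W : Type*} [DivisionRing K]
    [AddCommGroup V] [Module K V] [AddCommGroup W] [Module K W] (f : V →ₗ[K] W)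
    (U : Submodule K V) [FiniteDimensional K U] [FiniteDimensional K (ker f)] :
    finrank K U - finrank K (ker f) ≤ finrank K (U.map f) := by
  have hrank := (f.domRestrict U).finrank_range_add_finrank_ker
  rw [range_domRestrict, ker_domRestrict] at hrank
  have hker : finrank K ((ker f).comap U.subtype) ≤ finrank K (ker f) := by
    rw [← Submodule.finrank_map_subtype_eq]
    exact Submodule.finrank_mono (Submodule.map_comap_le _ _)
  omega

section Linearized

variable {R : Type*} [Semiring R] {n : ℕ}

noncomputable def linearizedPolynomial (q : ℕ) (a : Fin n → R) : R[X] :=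
  ∑ i, C (a i) * X ^ q ^ (i : ℕ)

theorem coeff_linearizedPolynomial_pow {q : ℕ} (hq : 1 < q) (a : Fin n → R) (i : Fin n) :
    (linearizedPolynomial q a).coeff (q ^ (i : ℕ)) = a i := by
  simp only [linearizedPolynomial, finsetSum_coeff, coeff_C_mul_X_pow]
  refine (Finset.sum_eq_single i (fun j _ hji => ?_) (by simp)).trans (by simp)
  simp [(Nat.pow_right_injective hq).ne (Fin.val_ne_of_ne hji).symm]

theorem linearizedPolynomial_ne_zero {q : ℕ} (hq : 1 < q) {a : Fin n → R} (ha : a ≠ 0) :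
    linearizedPolynomial q a ≠ 0 := by
  obtain ⟨i, hi⟩ := Function.ne_iff.mp ha
  intro h
  exact hi (by simpa [h] using (coeff_linearizedPolynomial_pow hq a i).symm)

theorem natDegree_linearizedPolynomial_le {q : ℕ} (hq : 0 < q) (a : Fin n → R) :
    (linearizedPolynomial q a).natDegree ≤ q ^ (n - 1) := by
  refine natDegree_sum_le_of_forall_le _ _ fun i _ => (natDegree_C_mul_X_pow_le _ _).trans ?_
  exact Nat.pow_le_pow_right hq (by omega)

variable (F : Type*) {L : Type*} [Field F] [Fintype F] [Field L] [Algebra F L]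

noncomputable def linearizedMap (a : Fin n → L) : L →ₗ[F] L :=
  ∑ i, a i • (FiniteField.frobeniusAlgHom F L ^ (i : ℕ)).toLinearMap

theorem linearizedMap_apply (a : Fin n → L) (x : L) :
    linearizedMap F a x = ∑ i, a i * x ^ Fintype.card F ^ (i : ℕ) := by
  simp [linearizedMap, FiniteField.coe_frobeniusAlgHom, pow_iterate]

theorem linearizedMap_apply_eq_eval (a : Fin n → L) (x : L) :
    linearizedMap F a x = (linearizedPolynomial (Fintype.card F) a).eval x := by
  simp [linearizedMap_apply, linearizedPolynomial, eval_finsetSum]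

theorem ker_linearizedMap_subset_rootSet {a : Fin n → L} (ha : a ≠ 0) :
    (ker (linearizedMap F a) : Set L) ⊆ (linearizedPolynomial (Fintype.card F) a).rootSet L :=
  fun x hx => by
    simpa [mem_rootSet, linearizedPolynomial_ne_zero Fintype.one_lt_card ha,
      linearizedMap_apply_eq_eval] using hx

theorem finite_ker_linearizedMap {a : Fin n → L} (ha : a ≠ 0) :
    Finite (ker (linearizedMap F a)) :=
  ((rootSet_finite _ L).subset (ker_linearizedMap_subset_rootSet F ha)).to_subtype

theorem finrank_ker_linearizedMap_le {a : Fin n → L} (ha : a ≠ 0) :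
    finrank F (ker (linearizedMap F a)) ≤ n - 1 := by
  set P := linearizedPolynomial (Fintype.card F) a
  have := finite_ker_linearizedMap F ha
  have hcard :
      Fintype.card F ^ finrank F (ker (linearizedMap F a)) ≤ Fintype.card F ^ (n - 1) :=
    calc Fintype.card F ^ finrank F (ker (linearizedMap F a))
        = (ker (linearizedMap F a) : Set L).ncard := by
          rw [← Nat.card_coe_set_eq, SetLike.coe_sort_coe,
            Module.natCard_eq_pow_finrank (K := F), Nat.card_eq_fintype_card]
      _ ≤ (P.rootSet L).ncard :=
          Set.ncard_le_ncard (ker_linearizedMap_subset_rootSet F ha) (P.rootSet_finite L)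
      _ ≤ P.natDegree := P.ncard_rootSet_le L
      _ ≤ Fintype.card F ^ (n - 1) := natDegree_linearizedPolynomial_le Fintype.card_pos a
  exact (Nat.pow_le_pow_iff_right Fintype.one_lt_card).mp hcard

end Linearized

theorem gabidulin_code_is_MRD_general
    (q K m : ℕ)
    (hKm : K ≤ m)
    (Fq FqN : Type) [Field Fq] [Field FqN] [Algebra Fq FqN]
    [Fintype Fq]
    (hcard : Fintype.card Fq = q)
    (g : Fin m → FqN) (hg : LinearIndependent Fq g)
    (a : Fin K → FqN) (ha : a ≠ 0) :
    m - K + 1 ≤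
      Module.finrank Fq
        ↥(Submodule.span Fq
          (Set.range fun j : Fin m => ∑ i : Fin K, a i * g j ^ q ^ (i : ℕ))) := by
  subst hcard
  have hK : K ≠ 0 := by
    rintro rfl
    exact ha (Subsingleton.elim _ _)
  have hcodeword :
      Submodule.span Fq (Set.range fun j => ∑ i : Fin K, a i * g j ^ Fintype.card Fq ^ (i : ℕ))
        = (Submodule.span Fq (Set.range g)).map (linearizedMap Fq a) := by
    simp only [Submodule.map_span, ← Set.range_comp, Function.comp_def, linearizedMap_apply]
  have := FiniteDimensional.span_of_finite Fq (Set.finite_range g)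
  have := finite_ker_linearizedMap Fq ha
  have hrank := Submodule.finrank_sub_finrank_ker_le_finrank_map (linearizedMap Fq a)
    (Submodule.span Fq (Set.range g))
  rw [finrank_span_eq_card hg, Fintype.card_fin] at hrank
  have hker := finrank_ker_linearizedMap_le Fq ha
  rw [hcodeword]
  omega

/-- Every nonzero Gabidulin codeword `(f(g_1), …, f(g_m))`, where
`f(x) = ∑_{i<K} a_i x^{q^i}` is a nonzero linearized polynomial and `g_1, …, g_m ∈ F_{q^N}`
are `F_q`-linearly independent, has rank weight (the `F_q`-dimension of the `F_q`-span of its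
coordinates) at least `m - K + 1`; hence the Gabidulin code is MRD with minimum rank
distance `m - K + 1`. -/
theorem gabidulin_code_is_MRD
    (q N K m : ℕ) (hq : ∃ p e : ℕ, p.Prime ∧ 0 < e ∧ q = p ^ e)
    (hKm : K ≤ m) (hmN : m ≤ N)
    (Fq FqN : Type) [Field Fq] [Field FqN] [Algebra Fq FqN]
    [Fintype Fq] [Fintype FqN]
    (hcard : Fintype.card Fq = q) (hcardN : Fintype.card FqN = q ^ N)
    (g : Fin m → FqN) (hg : LinearIndependent Fq g)
    (a : Fin K → FqN) (ha : a ≠ 0) :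
    m - K + 1 ≤
      Module.finrank Fq
        ↥(Submodule.span Fq
          (Set.range fun j : Fin m => ∑ i : Fin K, a i * g j ^ q ^ (i : ℕ))) :=
  gabidulin_code_is_MRD_general q K m hKm Fq FqN hcard g hg a ha
end

section
/- Let q be a prime power, let 1 ≤ δ ≤ m ≤ N, and let C be an F_q-linear subspace of the space of N × m matrices over F_q such that every nonzero matrix in C has rank at least δ. Then dim_{F_q} C ≤ N(m − δ + 1). -/
/-!
Fix a set `s` of `δ - 1` columns. A matrix vanishing off `s` has rank at most `δ - 1`, so the
only such matrix in `C` is `0`: deleting the columns in `s` is injective on `C`. Hence `C` embeds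
into the matrices with `m - δ + 1` columns, a space of dimension `N (m - δ + 1)`.
-/

open Finset Module

namespace Matrix

def submatrixLinearMap {l m n o R : Type*} [Semiring R] (r : l → m) (c : o → n) :
    Matrix m n R →ₗ[R] Matrix l o R where
  toFun A := A.submatrix r c
  map_add' _ _ := rfl
  map_smul' _ _ := rfl

theorem rank_le_card_of_forall_notMem_eq_zero {m n R : Type*} [Fintype n] [CommRing R]
    [StrongRankCondition R] {A : Matrix m n R} {s : Finset n} (hA : ∀ i, ∀ j ∉ s, A i j = 0) :
    A.rank ≤ #s := by
  classical
  have hA_factor :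
      A = A.submatrix id ((↑) : s → n) * (1 : Matrix n n R).submatrix ((↑) : s → n) id := by
    ext i j
    rw [mul_apply]
    simp only [submatrix_apply, id, one_apply, mul_ite, mul_one, mul_zero]
    rw [sum_coe_sort s (fun k => if k = j then A i k else 0), sum_ite_eq']
    split_ifs with hj
    · rfl
    · exact hA i j hj
  rw [hA_factor]
  exact (rank_mul_le_left _ _).trans ((rank_le_card_width _).trans_eq (Fintype.card_coe s))

theorem finrank_le_card_mul_card_sub_of_lt_rank {m n K : Type*} [Fintype m] [Fintype n]
    [Field K] (C : Submodule K (Matrix m n K)) (s : Finset n)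
    (hC : ∀ A ∈ C, A ≠ 0 → #s < A.rank) :
    finrank K C ≤ Fintype.card m * (Fintype.card n - #s) := by
  classical
  have hinj :
      Function.Injective ((submatrixLinearMap id ((↑) : {j // j ∉ s} → n)).comp C.subtype) := by
    rw [← LinearMap.ker_eq_bot, LinearMap.ker_eq_bot']
    rintro ⟨A, hA⟩ hdeleted
    by_contra hA0
    have hcols : ∀ i, ∀ j ∉ s, A i j = 0 := fun i j hj => congr_fun₂ hdeleted i ⟨j, hj⟩
    exact (hC A hA (by simpa using hA0)).not_ge (rank_le_card_of_forall_notMem_eq_zero hcols)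
  calc finrank K C ≤ finrank K (Matrix m {j // j ∉ s} K) :=
        LinearMap.finrank_le_finrank_of_injective hinj
    _ = Fintype.card m * (Fintype.card n - #s) := by
        rw [finrank_matrix, finrank_self, mul_one, Fintype.card_subtype_compl, Fintype.card_coe]

end Matrix

theorem rank_metric_singleton_bound_general
    (Fq : Type) [Field Fq]
    (N m δ : ℕ) (hδ1 : 1 ≤ δ) (hδm : δ ≤ m)
    (C : Submodule Fq (Matrix (Fin N) (Fin m) Fq))
    (hC : ∀ A ∈ C, A ≠ 0 → δ ≤ A.rank) :
    Module.finrank Fq ↥C ≤ N * (m - δ + 1) := by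
  obtain ⟨s, -, hs⟩ := exists_subset_card_eq (s := (univ : Finset (Fin m))) (n := δ - 1)
    (by simpa using (Nat.sub_le δ 1).trans hδm)
  have hbound := Matrix.finrank_le_card_mul_card_sub_of_lt_rank C s
    fun A hA hA0 => hs ▸ (Nat.sub_one_lt_of_le hδ1 le_rfl).trans_le (hC A hA hA0)
  simpa [hs, show m - (δ - 1) = m - δ + 1 by omega] using hbound

/-- Singleton bound for the rank metric. If `C` is an `F_q`-linear subspace
of `N × m` matrices over `F_q` (with `1 ≤ δ ≤ m ≤ N`) in which every nonzero matrix has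
rank at least `δ`, then `dim_{F_q} C ≤ N (m - δ + 1)`. -/
theorem rank_metric_singleton_bound
    (q : ℕ) (hq : ∃ p e : ℕ, p.Prime ∧ 0 < e ∧ q = p ^ e)
    (Fq : Type) [Field Fq] [Fintype Fq] (hcard : Fintype.card Fq = q)
    (N m δ : ℕ) (hδ1 : 1 ≤ δ) (hδm : δ ≤ m) (hmN : m ≤ N)
    (C : Submodule Fq (Matrix (Fin N) (Fin m) Fq))
    (hC : ∀ A ∈ C, A ≠ 0 → δ ≤ A.rank) :
    Module.finrank Fq ↥C ≤ N * (m - δ + 1) :=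
  rank_metric_singleton_bound_general Fq N m δ hδ1 hδm C hC
end

section
/- Let q be a prime power, F_q ⊆ F_{q^N}, and let C ⊆ (F_{q^N})^m be a set such that any two distinct elements of C are at rank distance at least δ. Let V ⊆ F_q^m be an F_q-subspace of dimension s, and let t be a nonnegative integer with 2t + s ≤ δ − 1. Then for every received word r ∈ (F_{q^N})^m there is at most one codeword c ∈ C for which r − c can be written as x + y where wt_R(x) ≤ t and y lies in the F_{q^N}-linear span of V inside (F_{q^N})^m. That is, a code of minimum rank distance δ can simultaneously correct a rank error of rank t and a rank erasure of rank s whenever 2t + s ≤ δ − 1. -/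
/-- The rank weight of a vector `x ∈ (F_{q^N})^m`: the dimension over `F_q` of the
`F_q`-linear span in `F_{q^N}` of the coordinates of `x`. -/
noncomputable def rankWeight (Fq : Type) [Field Fq] {FqN : Type} [Field FqN]
    [Algebra Fq FqN] {ι : Type} (x : ι → FqN) : ℕ :=
  Module.finrank Fq ↥(Submodule.span Fq (Set.range x))

/-!
Subtract the two decompositions: `c₁ - c₂ = (x₂ - x₁) - (y₁ - y₂)`. Rank weight is subadditive,
so the error part has rank weight at most `2t`. For the erasure part, expand `y₁ - y₂` in the
images `vᵢ` of an `F_q`-basis of `V`, say `y₁ - y₂ = ∑ αᵢ vᵢ` with `αᵢ ∈ F_{q^N}`; since the `vᵢ`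
have coordinates in `F_q`, every coordinate of `y₁ - y₂` lies in the `F_q`-span of the `s`
elements `αᵢ`, so its rank weight is at most `s`. Hence `wt_R(c₁ - c₂) ≤ 2t + s < δ`.
-/

section RankWeight

variable {Fq FqN ι : Type} [Field Fq] [Field FqN] [Algebra Fq FqN]

theorem rankWeight_le_finrank_of_forall_mem {x : ι → FqN} {U : Submodule Fq FqN}
    [Module.Finite Fq U] (hx : ∀ i, x i ∈ U) : rankWeight Fq x ≤ Module.finrank Fq U :=
  Submodule.finrank_mono (Submodule.span_le.2 (Set.range_subset_iff.2 hx))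

theorem rankWeight_sub_le [Finite ι] (a b : ι → FqN) :
    rankWeight Fq (a - b) ≤ rankWeight Fq a + rankWeight Fq b := by
  have := FiniteDimensional.span_of_finite Fq (Set.finite_range a)
  have := FiniteDimensional.span_of_finite Fq (Set.finite_range b)
  refine (rankWeight_le_finrank_of_forall_mem fun i => Submodule.sub_mem _ ?_ ?_).trans
    (Submodule.finrank_add_le_finrank_add_finrank _ _)
  · exact Submodule.mem_sup_left (Submodule.subset_span ⟨i, rfl⟩)
  · exact Submodule.mem_sup_right (Submodule.subset_span ⟨i, rfl⟩)

theorem rankWeight_le_finrank_of_mem_span_image {V : Submodule Fq (ι → Fq)}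
    [Module.Finite Fq V] {y : ι → FqN}
    (hy : y ∈ Submodule.span FqN
      ((fun v : ι → Fq => fun j : ι => algebraMap Fq FqN (v j)) '' (V : Set (ι → Fq)))) :
    rankWeight Fq y ≤ Module.finrank Fq V := by
  let b := Module.finBasis Fq V
  let v := V.subtype ∘ b
  let Φ := LinearMap.compLeft (Algebra.linearMap Fq FqN) ι
  have hV : Submodule.span Fq (Set.range v) = V := by
    rw [Set.range_comp, ← Submodule.map_span, b.span_eq, Submodule.map_subtype_top]
  have hspan : Submodule.span FqN (Set.range (Φ ∘ v)) = Submodule.span FqN (Φ '' V) := by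
    rw [Set.range_comp, ← Submodule.span_span_of_tower Fq, ← Submodule.map_span, hV,
      Submodule.map_coe]
  obtain ⟨α, rfl⟩ := (Submodule.mem_span_range_iff_exists_fun FqN).1 (hspan ▸ hy)
  have := FiniteDimensional.span_of_finite Fq (Set.finite_range α)
  refine (rankWeight_le_finrank_of_forall_mem (U := Submodule.span Fq (Set.range α))
    fun j => ?_).trans ((finrank_range_le_card α).trans (Fintype.card_fin _).le)
  have hcoord : (∑ i, α i • (Φ ∘ v) i) j = ∑ i, v i j • α i := by
    simp only [Finset.sum_apply, Pi.smul_apply, Function.comp_apply, Φ, LinearMap.compLeft_apply,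
      Algebra.linearMap_apply, smul_eq_mul]
    simp only [Algebra.smul_def, mul_comm]
  rw [hcoord]
  exact Submodule.sum_mem _ fun i _ => Submodule.smul_mem _ _ (Submodule.subset_span ⟨i, rfl⟩)

end RankWeight

theorem rank_metric_error_erasure_decoding_general
    (Fq FqN : Type) [Field Fq] [Field FqN] [Algebra Fq FqN]
    (m δ t s : ℕ) (C : Set (Fin m → FqN))
    (hdist : ∀ c₁ ∈ C, ∀ c₂ ∈ C, c₁ ≠ c₂ → δ ≤ rankWeight Fq (c₁ - c₂))
    (V : Submodule Fq (Fin m → Fq)) (hV : Module.finrank Fq ↥V = s)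
    (hts : 2 * t + s + 1 ≤ δ) :
    ∀ r : Fin m → FqN, ∀ c₁ ∈ C, ∀ c₂ ∈ C,
      (∃ x y : Fin m → FqN, r - c₁ = x + y ∧ rankWeight Fq x ≤ t ∧
        y ∈ Submodule.span FqN
          ((fun v : Fin m → Fq => fun j : Fin m => algebraMap Fq FqN (v j)) ''
            (V : Set (Fin m → Fq)))) →
      (∃ x y : Fin m → FqN, r - c₂ = x + y ∧ rankWeight Fq x ≤ t ∧
        y ∈ Submodule.span FqN
          ((fun v : Fin m → Fq => fun j : Fin m => algebraMap Fq FqN (v j)) ''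
            (V : Set (Fin m → Fq)))) →
      c₁ = c₂ := by
  rintro r c₁ hc₁ c₂ hc₂ ⟨x₁, y₁, h₁, hx₁, hy₁⟩ ⟨x₂, y₂, h₂, hx₂, hy₂⟩
  by_contra hne
  have hdiff : c₁ - c₂ = (x₂ - x₁) - (y₁ - y₂) := by
    rw [← sub_sub_sub_cancel_left c₂ c₁ r, h₁, h₂]
    abel
  have herasure : rankWeight Fq (y₁ - y₂) ≤ s :=
    hV ▸ rankWeight_le_finrank_of_mem_span_image (Submodule.sub_mem _ hy₁ hy₂)
  have hclose : rankWeight Fq (c₁ - c₂) ≤ 2 * t + s := by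
    calc rankWeight Fq (c₁ - c₂)
        ≤ rankWeight Fq (x₂ - x₁) + rankWeight Fq (y₁ - y₂) := hdiff ▸ rankWeight_sub_le _ _
      _ ≤ (rankWeight Fq x₂ + rankWeight Fq x₁) + s :=
        add_le_add (rankWeight_sub_le _ _) herasure
      _ ≤ 2 * t + s := by omega
  have := hdist c₁ hc₁ c₂ hc₂ hne
  omega

/-- A code `C ⊆ (F_{q^N})^m` of minimum rank distance `δ` can simultaneously
correct a rank error of rank `t` and a rank erasure of rank `s` whenever `2t + s ≤ δ - 1`:
if `V ⊆ F_q^m` is an `F_q`-subspace of dimension `s`, then for every received word `r`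
there is at most one codeword `c ∈ C` such that `r - c = x + y` with `wt_R(x) ≤ t` and `y`
in the `F_{q^N}`-span of (the embedding into `(F_{q^N})^m` of) `V`. -/
theorem rank_metric_error_erasure_decoding
    (q N : ℕ) (hq : ∃ p e : ℕ, p.Prime ∧ 0 < e ∧ q = p ^ e)
    (Fq FqN : Type) [Field Fq] [Field FqN] [Algebra Fq FqN]
    [Fintype Fq] [Fintype FqN]
    (hcard : Fintype.card Fq = q) (hcardN : Fintype.card FqN = q ^ N)
    (m δ t s : ℕ) (C : Set (Fin m → FqN))
    (hdist : ∀ c₁ ∈ C, ∀ c₂ ∈ C, c₁ ≠ c₂ → δ ≤ rankWeight Fq (c₁ - c₂))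
    (V : Submodule Fq (Fin m → Fq)) (hV : Module.finrank Fq ↥V = s)
    (hts : 2 * t + s + 1 ≤ δ) :
    ∀ r : Fin m → FqN, ∀ c₁ ∈ C, ∀ c₂ ∈ C,
      (∃ x y : Fin m → FqN, r - c₁ = x + y ∧ rankWeight Fq x ≤ t ∧
        y ∈ Submodule.span FqN
          ((fun v : Fin m → Fq => fun j : Fin m => algebraMap Fq FqN (v j)) ''
            (V : Set (Fin m → Fq)))) →
      (∃ x y : Fin m → FqN, r - c₂ = x + y ∧ rankWeight Fq x ≤ t ∧
        y ∈ Submodule.span FqN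
          ((fun v : Fin m → Fq => fun j : Fin m => algebraMap Fq FqN (v j)) ''
            (V : Set (Fin m → Fq)))) →
      c₁ = c₂ :=
  rank_metric_error_erasure_decoding_general Fq FqN m δ t s C hdist V hV hts
end

section
/- Let q be a prime power, F_q ⊆ F_{q^N}, and let g_1, …, g_m ∈ F_{q^N} be linearly independent over F_q. Partition {1, …, m} into disjoint groups G_1, …, G_s and for each i set p_i = ∑_{l ∈ G_i} g_l. Then any subset T of {g_1, …, g_m} ∪ {p_1, …, p_s} that contains, for each i, at most |G_i| elements from the augmented group {g_l : l ∈ G_i} ∪ {p_i}, is linearly independent over F_q. -/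
/-!
Write every selected vector in coordinates with respect to the independent family `g`. For each
selected parity `p i` the group `G i` is not entirely selected, so it contains an index `l i ∉ A`;
the `l i`-th coordinate sees `p i` with coefficient `1` and vanishes on every other selected
vector (the groups are disjoint). Evaluating a vanishing linear combination at these coordinates
kills the parity coefficients, and independence of `g` then kills the rest.
-/

open Finsupp Function

section

variable {R M : Type*} [Ring R] [AddCommGroup M] [Module R M]

theorem LinearIndependent.sumElim_of_biorthogonal {α β : Type*} [Fintype α] [Fintype β]
    {u : α → M} {w : β → M} (hu : LinearIndependent R u) (φ : β → M →ₗ[R] R)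
    (hφu : ∀ j a, φ j (u a) = 0) (hφw : ∀ j, φ j (w j) = 1)
    (hφw_ne : ∀ j k, j ≠ k → φ j (w k) = 0) :
    LinearIndependent R (Sum.elim u w) := by
  rw [Fintype.linearIndependent_iff]
  intro c hc
  simp only [Fintype.sum_sum_type, Sum.elim_inl, Sum.elim_inr] at hc
  have hw : ∀ j, c (.inr j) = 0 := fun j => by
    have h := congr(φ j $hc)
    simp only [map_add, map_sum, map_smul, hφu, smul_eq_mul, mul_zero, Finset.sum_const_zero,
      zero_add, map_zero] at h
    rwa [Finset.sum_eq_single j (fun k _ hk => by rw [hφw_ne j k hk.symm, mul_zero])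
      (by simp), hφw, mul_one] at h
  have hu' : ∀ a, c (.inl a) = 0 :=
    Fintype.linearIndependent_iff.mp hu _ (by simpa [hw] using hc)
  rintro (a | j)
  exacts [hu' a, hw j]

theorem linearIndependent_sumElim_single_blockIndicator {ι κ : Type*}
    (G : κ → Finset ι) (hdisj : Pairwise (Disjoint on G)) (A : Finset ι) (I : Finset κ)
    (hI : ∀ i ∈ I, ∃ l ∈ G i, l ∉ A) :
    LinearIndependent R (Sum.elim (fun l : A => single (l : ι) (1 : R))
      (fun i : I => ∑ l ∈ G i, single l (1 : R))) := by
  classical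
  choose w hwG hwA using fun i : I => hI i i.2
  have hsum_apply (k : κ) (l : ι) :
      (∑ l' ∈ G k, single l' (1 : R)) l = if l ∈ G k then 1 else 0 := by
    simp [finsetSum_apply, single_apply]
  refine ((linearIndependent_single_one (ι := ι) (R := R)).comp _
    Subtype.val_injective).sumElim_of_biorthogonal (fun j => lapply (w j)) ?_ ?_ ?_
  · intro j a
    exact single_eq_of_ne (fun h => hwA j (h ▸ a.2))
  · intro j
    rw [lapply_apply, hsum_apply, if_pos (hwG j)]
  · intro j k hjk
    have hwk : w j ∉ G k := Finset.disjoint_left.mp (hdisj (Subtype.coe_ne_coe.mpr hjk)) (hwG j)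
    rw [lapply_apply, hsum_apply, if_neg hwk]

theorem LinearIndependent.sumElim_blockSums {ι κ : Type*} {g : ι → M}
    (hg : LinearIndependent R g) (G : κ → Finset ι) (hdisj : Pairwise (Disjoint on G))
    (A : Finset ι) (I : Finset κ) (hI : ∀ i ∈ I, ∃ l ∈ G i, l ∉ A) :
    LinearIndependent R (Sum.elim (fun l : A => g l) (fun i : I => ∑ l ∈ G i, g l)) := by
  convert (linearIndependent_sumElim_single_blockIndicator (R := R) G hdisj A I hI).map'
    (linearCombination R g) (LinearMap.ker_eq_bot.mpr hg) using 1
  ext (l | i) <;> simp [map_sum]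

end

theorem augmented_group_selection_linearIndependent_general
    (Fq FqN : Type) [Field Fq] [Field FqN] [Algebra Fq FqN]
    (m s : ℕ) (g : Fin m → FqN) (hg : LinearIndependent Fq g)
    (G : Fin s → Finset (Fin m))
    (hdisj : ∀ i j : Fin s, i ≠ j → Disjoint (G i) (G j))
    (p : Fin s → FqN) (hp : ∀ i : Fin s, p i = ∑ l ∈ G i, g l)
    (A : Finset (Fin m)) (I : Finset (Fin s))
    (hsel : ∀ i : Fin s, (A ∩ G i).card + (if i ∈ I then 1 else 0) ≤ (G i).card) :
    LinearIndependent Fq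
      (Sum.elim (fun l : {x // x ∈ A} => g l.1) (fun i : {x // x ∈ I} => p i.1)) := by
  obtain rfl : p = fun i => ∑ l ∈ G i, g l := funext hp
  refine hg.sumElim_blockSums G hdisj A I fun i hi => ?_
  have hlt : (A ∩ G i).card < (G i).card := by simpa [hi] using hsel i
  obtain ⟨l, hlG, hlA⟩ := Finset.exists_mem_notMem_of_card_lt_card hlt
  exact ⟨l, hlG, fun hl => hlA (Finset.mem_inter.mpr ⟨hl, hlG⟩)⟩

/-- Let `g_1, …, g_m ∈ F_{q^N}` be linearly independent over `F_q`, let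
`G_1, …, G_s` partition `{1, …, m}`, and let `p_i = ∑_{l ∈ G_i} g_l`. Any collection
consisting of points `g_l` (`l ∈ A`) and parities `p_i` (`i ∈ I`) that contains at most
`|G_i|` elements from each augmented group `{g_l : l ∈ G_i} ∪ {p_i}` is linearly
independent over `F_q`. -/
theorem augmented_group_selection_linearIndependent
    (q N : ℕ) (hq : ∃ p e : ℕ, p.Prime ∧ 0 < e ∧ q = p ^ e)
    (Fq FqN : Type) [Field Fq] [Field FqN] [Algebra Fq FqN]
    [Fintype Fq] [Fintype FqN]
    (hcard : Fintype.card Fq = q) (hcardN : Fintype.card FqN = q ^ N)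
    (m s : ℕ) (g : Fin m → FqN) (hg : LinearIndependent Fq g)
    (G : Fin s → Finset (Fin m))
    (hdisj : ∀ i j : Fin s, i ≠ j → Disjoint (G i) (G j))
    (hcover : Finset.univ.biUnion G = (Finset.univ : Finset (Fin m)))
    (p : Fin s → FqN) (hp : ∀ i : Fin s, p i = ∑ l ∈ G i, g l)
    (A : Finset (Fin m)) (I : Finset (Fin s))
    (hsel : ∀ i : Fin s, (A ∩ G i).card + (if i ∈ I then 1 else 0) ≤ (G i).card) :
    LinearIndependent Fq
      (Sum.elim (fun l : {x // x ∈ A} => g l.1) (fun i : {x // x ∈ I} => p i.1)) :=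
  augmented_group_selection_linearIndependent_general Fq FqN m s g hg G hdisj p hp A I hsel
end

section
/- Let r ≥ 1 and k ≥ 1 be integers and let c_1, …, c_s be nonnegative integers with c_i ≤ r + 1 for all i. If ∑_{i=1}^{s} c_i ≥ k + ⌈k/r⌉ − 1, then ∑_{i=1}^{s} min(c_i, r) ≥ k. -/
/-!
Call a group full when `c i = r + 1`, and let `t` be the number of full groups. Capping at `r`
loses exactly one symbol per full group, so `∑ c i = ∑ min (c i) r + t`, while the full groups
alone already contribute `t * r` to `∑ min (c i) r`. If `∑ min (c i) r < k`, then `t * r < k`,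
so `t ≤ ⌈k/r⌉ - 1`, and the hypothesis forces `∑ min (c i) r ≥ k` after all.
-/

open Finset

section CappedSums

variable {ι : Type*} (s : Finset ι) (c : ι → ℕ) (r : ℕ)

theorem sum_le_sum_min_add_card_filter_lt (hc : ∀ i ∈ s, c i ≤ r + 1) :
    ∑ i ∈ s, c i ≤ ∑ i ∈ s, min (c i) r + #{i ∈ s | r < c i} := by
  rw [card_filter, ← sum_add_distrib]
  refine sum_le_sum fun i hi => ?_
  have := hc i hi
  split_ifs <;> omega

theorem card_filter_lt_mul_le_sum_min :
    #{i ∈ s | r < c i} * r ≤ ∑ i ∈ s, min (c i) r :=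
  calc #{i ∈ s | r < c i} * r = ∑ i ∈ s with r < c i, min (c i) r := by
        rw [sum_congr rfl fun i hi => min_eq_right (mem_filter.mp hi).2.le, sum_const,
          smul_eq_mul]
    _ ≤ ∑ i ∈ s, min (c i) r := sum_le_sum_of_subset (filter_subset _ _)

end CappedSums

theorem Nat.le_of_mul_le_of_add_ceil_div_le {r k S t : ℕ} (hr : 0 < r) (htS : t * r ≤ S)
    (hk : k + (k + r - 1) / r - 1 ≤ S + t) : k ≤ S := by
  by_contra! hSk
  have ht : t + 1 ≤ (k + r - 1) / r :=
    (Nat.le_div_iff_mul_le hr).2 (by rw [Nat.succ_mul]; omega)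
  omega

theorem locally_repairable_counting_lemma_general
    (r k s : ℕ) (hr : 1 ≤ r)
    (c : Fin s → ℕ) (hc : ∀ i, c i ≤ r + 1)
    (hsum : k + (k + r - 1) / r - 1 ≤ ∑ i : Fin s, c i) :
    k ≤ ∑ i : Fin s, min (c i) r :=
  Nat.le_of_mul_le_of_add_ceil_div_le hr (card_filter_lt_mul_le_sum_min univ c r)
    (hsum.trans (sum_le_sum_min_add_card_filter_lt univ c r fun i _ => hc i))

/-- Counting lemma for locally repairable codes. Let `r ≥ 1`, `k ≥ 1` and let
`c_1, …, c_s` be nonnegative integers with `c_i ≤ r + 1`. If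
`∑ c_i ≥ k + ⌈k/r⌉ - 1` then `∑ min(c_i, r) ≥ k`. (Here `⌈k/r⌉ = (k + r - 1) / r` in
natural-number arithmetic.) -/
theorem locally_repairable_counting_lemma
    (r k s : ℕ) (hr : 1 ≤ r) (hk : 1 ≤ k)
    (c : Fin s → ℕ) (hc : ∀ i, c i ≤ r + 1)
    (hsum : k + (k + r - 1) / r - 1 ≤ ∑ i : Fin s, c i) :
    k ≤ ∑ i : Fin s, min (c i) r :=
  locally_repairable_counting_lemma_general r k s hr c hc hsum
end

section
/- Let q be a prime power, F_q ⊆ F_{q^N}, let r divide m, and let g_1, …, g_m ∈ F_{q^N} be linearly independent over F_q. Partition {1, …, m} into m/r groups G_1, …, G_{m/r} of size r, and set p_i = ∑_{l ∈ G_i} g_l. Let k ≤ m. Then for any subsets A ⊆ {1, …, m} and I ⊆ {1, …, m/r} with |A| + |I| ≥ k + ⌈k/r⌉ − 1, the F_q-linear span of {g_l : l ∈ A} ∪ {p_i : i ∈ I} has dimension at least k over F_q. In other words, after any n − k + 1 − ⌈k/r⌉ erasures from the n = m + m/r evaluation points, the remaining points contain k linearly independent elements. -/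
/-! Let `T ⊆ I` index the groups contained in `A`. The vectors `g a` (`a ∈ A`) and
`p i - ∑_{l ∈ G i ∩ A} g l` (`i ∈ I \ T`) lie in the span, and each is the sum of `g` over one of
the pairwise disjoint nonempty blocks `{a}` and `G i \ A`, so they are linearly independent.
Their number `|A| + |I \ T|` is at least `k`: if `|T| ≥ ⌈k/r⌉` then `|A| ≥ r|T| ≥ k`, and
otherwise `|I \ T| ≥ |I| - ⌈k/r⌉ + 1`. -/

open Finset Function Submodule

section

variable {R M ι κ : Type*} [Ring R] [AddCommGroup M] [Module R M] {v : κ → M}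

theorem LinearIndependent.iSupIndep_span_image (hv : LinearIndependent R v) {s : ι → Set κ}
    (hs : Pairwise (Disjoint on s)) : iSupIndep fun i => span R (v '' s i) := by
  refine iSupIndep_def.2 fun i => ?_
  rw [← span_iUnion₂, ← Set.image_iUnion₂]
  exact hv.disjoint_span_image (Set.disjoint_iUnion₂_right.2 fun j hji => hs hji.symm)

theorem LinearIndependent.finset_sum_ne_zero [Nontrivial R] (hv : LinearIndependent R v)
    {s : Finset κ} (hs : s.Nonempty) : ∑ l ∈ s, v l ≠ 0 := by
  intro hzero
  obtain ⟨l, hl⟩ := hs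
  exact one_ne_zero (linearIndependent_iff'.1 hv s (fun _ => 1) (by simpa using hzero) l hl)

theorem Finset.sum_sdiff_mem_span [DecidableEq κ] {S : Set M} {G A : Finset κ}
    (hG : ∑ l ∈ G, v l ∈ span R S) (hA : v '' ↑A ⊆ S) : ∑ l ∈ G \ A, v l ∈ span R S := by
  have hsplit : ∑ l ∈ G \ A, v l + ∑ l ∈ G ∩ A, v l = ∑ l ∈ G, v l := by
    rw [← sdiff_inter_self_left, sum_sdiff inter_subset_left]
  rw [eq_sub_of_add_eq hsplit]
  exact sub_mem hG (sum_mem fun l hl => subset_span (hA ⟨l, (mem_inter.1 hl).2, rfl⟩))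

end

section

variable {K V ι κ : Type*} [DivisionRing K] [AddCommGroup V] [Module K V] {v : κ → V}
  {s : ι → Finset κ}

theorem LinearIndependent.finset_sum_of_pairwise_disjoint (hv : LinearIndependent K v)
    (hs : Pairwise (Disjoint on s)) (hne : ∀ i, (s i).Nonempty) :
    LinearIndependent K fun i => ∑ l ∈ s i, v l :=
  (hv.iSupIndep_span_image (s := fun i => (s i : Set κ))
      fun _ _ hij => disjoint_coe.2 (hs hij)).linearIndependent _
    (fun _ => sum_mem fun l hl => subset_span ⟨l, hl, rfl⟩)
    (fun i => hv.finset_sum_ne_zero (hne i))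

theorem LinearIndependent.card_le_finrank_span_of_sum_mem [Fintype ι] (hv : LinearIndependent K v)
    (hs : Pairwise (Disjoint on s)) (hne : ∀ i, (s i).Nonempty) {S : Set V} (hS : S.Finite)
    (hmem : ∀ i, ∑ l ∈ s i, v l ∈ span K S) : Fintype.card ι ≤ Module.finrank K (span K S) := by
  have : FiniteDimensional K (span K S) := FiniteDimensional.span_of_finite K hS
  have hli : LinearIndependent K fun i => (⟨_, hmem i⟩ : span K S) :=
    .of_comp (span K S).subtype (hv.finset_sum_of_pairwise_disjoint hs hne)
  exact hli.fintype_card_le_finrank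

end

section

variable {ι κ : Type*} [DecidableEq κ]

def residualBlocks (A : Finset κ) (t : ι → Finset κ) : ↥A ⊕ ι → Finset κ :=
  Sum.elim (fun a => {↑a}) fun i => t i \ A

theorem pairwise_disjoint_residualBlocks {A : Finset κ} {t : ι → Finset κ}
    (ht : Pairwise (Disjoint on t)) : Pairwise (Disjoint on residualBlocks A t) := by
  rintro (a | i) (b | j) hne
  · exact disjoint_singleton.2 fun h => hne (congrArg _ (Subtype.ext h))
  · exact disjoint_singleton_left.2 fun h => (mem_sdiff.1 h).2 a.2
  · exact disjoint_singleton_right.2 fun h => (mem_sdiff.1 h).2 b.2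
  · exact (ht fun h => hne (congrArg _ h)).mono sdiff_subset sdiff_subset

theorem residualBlocks_nonempty {A : Finset κ} {t : ι → Finset κ} (ht : ∀ i, ¬ t i ⊆ A) :
    ∀ j, (residualBlocks A t j).Nonempty
  | .inl _ => singleton_nonempty _
  | .inr i => sdiff_nonempty.2 (ht i)

end

theorem Finset.mul_card_le_card_of_pairwiseDisjoint {ι α : Type*} [DecidableEq α] {s : Finset ι}
    {t : ι → Finset α} {u : Finset α} {r : ℕ} (hdisj : (s : Set ι).PairwiseDisjoint t)
    (hcard : ∀ i ∈ s, r ≤ #(t i)) (hsub : ∀ i ∈ s, t i ⊆ u) : r * #s ≤ #u :=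
  calc r * #s ≤ ∑ i ∈ s, #(t i) := by
        simpa [mul_comm] using card_nsmul_le_sum s (fun i => #(t i)) r hcard
    _ = #(s.biUnion t) := (card_biUnion hdisj).symm
    _ ≤ #u := card_le_card (biUnion_subset.2 hsub)

theorem Nat.le_add_of_le_add_ceilDiv_sub_one {r t a i k : ℕ} (hr : 0 < r) (hta : r * t ≤ a)
    (h : k + (k + r - 1) / r - 1 ≤ a + (t + i)) : k ≤ a + i := by
  by_cases hct : (k + r - 1) / r ≤ t
  · have := Nat.div_add_mod (k + r - 1) r
    have := Nat.mod_lt (k + r - 1) hr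
    have := Nat.mul_le_mul_left r hct
    omega
  · omega

theorem locally_repairable_surviving_points_span_general
    (m r k : ℕ)
    (hr : 0 < r)
    (Fq FqN : Type) [Field Fq] [Field FqN] [Algebra Fq FqN]
    (g : Fin m → FqN) (hg : LinearIndependent Fq g)
    (G : Fin (m / r) → Finset (Fin m))
    (hGcard : ∀ i, (G i).card = r)
    (hdisj : ∀ i j : Fin (m / r), i ≠ j → Disjoint (G i) (G j))
    (p : Fin (m / r) → FqN) (hp : ∀ i, p i = ∑ l ∈ G i, g l)
    (A : Finset (Fin m)) (I : Finset (Fin (m / r)))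
    (hAI : k + (k + r - 1) / r - 1 ≤ A.card + I.card) :
    k ≤ Module.finrank Fq ↥(Submodule.span Fq ((g '' ↑A) ∪ (p '' ↑I))) := by
  classical
  set S := g '' ↑A ∪ p '' ↑I
  set I' := I.filter fun i => ¬ G i ⊆ A
  have hmem : ∀ j, ∑ l ∈ residualBlocks A (fun i : I' => G i) j, g l ∈ span Fq S
    | .inl a => by
      simp only [residualBlocks, Sum.elim_inl, sum_singleton]
      exact subset_span (Set.mem_union_left _ ⟨a, a.2, rfl⟩)
    | .inr i => sum_sdiff_mem_span
      (hp i ▸ subset_span (Set.mem_union_right _ ⟨i, (mem_filter.1 i.2).1, rfl⟩))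
      Set.subset_union_left
  calc k ≤ #A + #I' := by
        refine Nat.le_add_of_le_add_ceilDiv_sub_one hr (mul_card_le_card_of_pairwiseDisjoint
          (s := I.filter fun i => G i ⊆ A) (fun i _ j _ hij => hdisj i j hij)
          (fun i _ => (hGcard i).ge) (fun i hi => (mem_filter.1 hi).2)) ?_
        rwa [card_filter_add_card_filter_not]
    _ = Fintype.card (↥A ⊕ ↥I') := by simp
    _ ≤ Module.finrank Fq (span Fq S) := hg.card_le_finrank_span_of_sum_mem
      (pairwise_disjoint_residualBlocks (t := fun i : I' => G i)
        fun i j hij => hdisj i j (Subtype.coe_injective.ne hij))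
      (residualBlocks_nonempty fun i => (mem_filter.1 i.2).2)
      ((A.finite_toSet.image g).union (I.finite_toSet.image p)) hmem

/-- Let `g_1, …, g_m ∈ F_{q^N}` be linearly independent over `F_q`, with
`{1, …, m}` partitioned into `m/r` groups `G_i` of size `r` and parities
`p_i = ∑_{l ∈ G_i} g_l`, and let `k ≤ m`. For any `A ⊆ {1, …, m}` and
`I ⊆ {1, …, m/r}` with `|A| + |I| ≥ k + ⌈k/r⌉ - 1`, the `F_q`-span of
`{g_l : l ∈ A} ∪ {p_i : i ∈ I}` has dimension at least `k`; i.e. after any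
`n - k + 1 - ⌈k/r⌉` erasures from the `n = m + m/r` evaluation points, the remaining
points contain `k` linearly independent elements. -/
theorem locally_repairable_surviving_points_span
    (q N m r k : ℕ) (hq : ∃ p e : ℕ, p.Prime ∧ 0 < e ∧ q = p ^ e)
    (hr : 0 < r) (hrm : r ∣ m) (hkm : k ≤ m)
    (Fq FqN : Type) [Field Fq] [Field FqN] [Algebra Fq FqN]
    [Fintype Fq] [Fintype FqN]
    (hcard : Fintype.card Fq = q) (hcardN : Fintype.card FqN = q ^ N)
    (g : Fin m → FqN) (hg : LinearIndependent Fq g)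
    (G : Fin (m / r) → Finset (Fin m))
    (hGcard : ∀ i, (G i).card = r)
    (hdisj : ∀ i j : Fin (m / r), i ≠ j → Disjoint (G i) (G j))
    (hcover : Finset.univ.biUnion G = (Finset.univ : Finset (Fin m)))
    (p : Fin (m / r) → FqN) (hp : ∀ i, p i = ∑ l ∈ G i, g l)
    (A : Finset (Fin m)) (I : Finset (Fin (m / r)))
    (hAI : k + (k + r - 1) / r - 1 ≤ A.card + I.card) :
    k ≤ Module.finrank Fq ↥(Submodule.span Fq ((g '' ↑A) ∪ (p '' ↑I))) :=
  locally_repairable_surviving_points_span_general m r k hr Fq FqN g hg G hGcard hdisj p hp A I hAI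
end
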